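/- arXiv:1603.08986 — 9 statements merged into one kernel-verified Lean document; each statement's English description precedes it below -/
import Mathlib

section
/- Let q₀ = (1,1,0) ∈ ℍ and define f(p) = d_R(p, q₀) for p ∈ ℍ. Then |f(p) − f(p')| ≤ d_R(p, p') for all p, p' ∈ ℍ, but there is no constant L > 0 such that |f(p) − f(p')| ≤ L·d_L(p, p') for all p, p' ∈ ℍ. -/
/-!
Writing `w(p) = (x² + y²) + 4iz ∈ ℂ` and `ζ(p) = x + iy`, one has `|p|_G = √|w(p)|`,
`|ζ(p)|² = Re w(p) ≤ |w(p)|` and `w(p·q) = w(p) + w(q) + 2 conj(ζ(p)) ζ(q)`. The triangle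
inequality in `ℂ` therefore gives `|w(p·q)| ≤ (|p|_G + |q|_G)²`, i.e. the gauge is subadditive, so
`d_R` is a metric and `f = d_R(·, q₀)` is 1-Lipschitz for it.

For `d_L`, move `q₀` by the horizontal left translate `p' = q₀·(a, 0, 0)`: then `d_L(q₀, p') = a`,
while `p'·q₀⁻¹ = (a, 0, -a)` has a vertical component, so `f(p') ≥ 2√a`. As `a → 0` the ratio
`f(p') / d_L(q₀, p') ≥ 2 / √a` is unbounded.
-/

noncomputable section

/-- The Heisenberg group as a set: `ℝ³` with coordinates `(x, y, z)`. -/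
abbrev Heis : Type := ℝ × ℝ × ℝ

/-- The Heisenberg group multiplication. -/
def Hmul (p q : Heis) : Heis :=
  (p.1 + q.1, p.2.1 + q.2.1, p.2.2 + q.2.2 + (p.1 * q.2.1 - q.1 * p.2.1) / 2)

/-- The Heisenberg group inverse. -/
def Hinv (p : Heis) : Heis := (-p.1, -p.2.1, -p.2.2)

/-- The Korányi gauge `|p|_G = ((x² + y²)² + 16 z²)^(1/4)`. -/
def kGauge (p : Heis) : ℝ := ((p.1 ^ 2 + p.2.1 ^ 2) ^ 2 + 16 * p.2.2 ^ 2) ^ ((1 : ℝ) / 4)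

/-- The left-invariant gauge metric `d_L(p,q) = |p⁻¹·q|_G`. -/
def dL (p q : Heis) : ℝ := kGauge (Hmul (Hinv p) q)

/-- The right-invariant gauge metric `d_R(p,q) = |p·q⁻¹|_G`. -/
def dR (p q : Heis) : ℝ := kGauge (Hmul p (Hinv q))

/-- The base point `q₀ = (1,1,0)`. -/
def q₀ : Heis := (1, 1, 0)

open ComplexConjugate

def kGaugeCoord (p : Heis) : ℂ := ⟨p.1 ^ 2 + p.2.1 ^ 2, 4 * p.2.2⟩

def horizCoord (p : Heis) : ℂ := ⟨p.1, p.2.1⟩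

lemma kGauge_eq_sqrt_norm (p : Heis) : kGauge p = √‖kGaugeCoord p‖ := by
  have hS : (0 : ℝ) ≤ (p.1 ^ 2 + p.2.1 ^ 2) ^ 2 + 16 * p.2.2 ^ 2 := by positivity
  rw [kGauge, kGaugeCoord, Complex.norm_def, Complex.normSq_mk,
    show (p.1 ^ 2 + p.2.1 ^ 2) * (p.1 ^ 2 + p.2.1 ^ 2) + 4 * p.2.2 * (4 * p.2.2)
      = (p.1 ^ 2 + p.2.1 ^ 2) ^ 2 + 16 * p.2.2 ^ 2 by ring,
    Real.sqrt_eq_rpow, Real.sqrt_eq_rpow, ← Real.rpow_mul hS]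
  norm_num

lemma kGauge_nonneg (p : Heis) : 0 ≤ kGauge p := by
  rw [kGauge_eq_sqrt_norm]
  positivity

lemma kGauge_sq (p : Heis) : kGauge p ^ 2 = ‖kGaugeCoord p‖ := by
  rw [kGauge_eq_sqrt_norm, Real.sq_sqrt (norm_nonneg _)]

lemma norm_horizCoord_le_kGauge (p : Heis) : ‖horizCoord p‖ ≤ kGauge p := by
  rw [kGauge_eq_sqrt_norm, Real.le_sqrt (norm_nonneg _) (norm_nonneg _), Complex.sq_norm,
    horizCoord, Complex.normSq_mk]
  calc p.1 * p.1 + p.2.1 * p.2.1 = (kGaugeCoord p).re := by simp only [kGaugeCoord]; ring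
    _ ≤ ‖kGaugeCoord p‖ := Complex.re_le_norm _

lemma two_mul_sqrt_abs_le_kGauge (p : Heis) : 2 * √|p.2.2| ≤ kGauge p := by
  rw [kGauge_eq_sqrt_norm, show (2 : ℝ) = √4 by norm_num, ← Real.sqrt_mul zero_le_four]
  gcongr
  calc 4 * |p.2.2| = |(kGaugeCoord p).im| := by simp [kGaugeCoord, abs_mul]
    _ ≤ ‖kGaugeCoord p‖ := Complex.abs_im_le_norm _

lemma kGauge_horizontal (a : ℝ) : kGauge (a, 0, 0) = |a| := by
  rw [kGauge_eq_sqrt_norm, kGaugeCoord, Complex.norm_def, Complex.normSq_mk]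
  norm_num [Real.sqrt_mul_self (sq_nonneg a), Real.sqrt_sq_eq_abs]

lemma kGaugeCoord_Hmul (p q : Heis) :
    kGaugeCoord (Hmul p q) =
      kGaugeCoord p + kGaugeCoord q + 2 * (conj (horizCoord p) * horizCoord q) := by
  apply Complex.ext <;> simp [kGaugeCoord, horizCoord, Hmul] <;> ring

/-- Cygan's inequality. -/
lemma kGauge_Hmul_le (p q : Heis) : kGauge (Hmul p q) ≤ kGauge p + kGauge q := by
  rw [kGauge_eq_sqrt_norm (Hmul p q),
    Real.sqrt_le_left (add_nonneg (kGauge_nonneg p) (kGauge_nonneg q))]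
  calc ‖kGaugeCoord (Hmul p q)‖
      ≤ ‖kGaugeCoord p‖ + ‖kGaugeCoord q‖ + 2 * (‖horizCoord p‖ * ‖horizCoord q‖) := by
        rw [kGaugeCoord_Hmul]
        refine (norm_add_le _ _).trans (add_le_add (norm_add_le _ _) ?_)
        simp
    _ ≤ kGauge p ^ 2 + kGauge q ^ 2 + 2 * (kGauge p * kGauge q) := by
        rw [kGauge_sq, kGauge_sq]
        have := norm_horizCoord_le_kGauge p
        have := norm_horizCoord_le_kGauge q
        have := kGauge_nonneg p
        gcongr
    _ = (kGauge p + kGauge q) ^ 2 := by ring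

lemma kGauge_Hinv (p : Heis) : kGauge (Hinv p) = kGauge p := by
  simp [kGauge, Hinv]

lemma dR_self (p : Heis) : dR p p = 0 := by
  have h : Hmul p (Hinv p) = (0, 0, 0) := by
    simp only [Hmul, Hinv, Prod.ext_iff]
    refine ⟨by ring, by ring, by ring⟩
  rw [dR, h, kGauge_horizontal, abs_zero]

lemma dR_comm (p q : Heis) : dR p q = dR q p := by
  have h : Hmul q (Hinv p) = Hinv (Hmul p (Hinv q)) := by
    simp only [Hmul, Hinv, Prod.ext_iff]
    refine ⟨by ring, by ring, by ring⟩
  rw [dR, dR, h, kGauge_Hinv]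

lemma dR_triangle (p r q : Heis) : dR p q ≤ dR p r + dR r q := by
  have h : Hmul p (Hinv q) = Hmul (Hmul p (Hinv r)) (Hmul r (Hinv q)) := by
    simp only [Hmul, Hinv, Prod.ext_iff]
    refine ⟨by ring, by ring, by ring⟩
  rw [dR, h]
  exact kGauge_Hmul_le _ _

lemma dR_nonneg (p q : Heis) : 0 ≤ dR p q := kGauge_nonneg _

lemma abs_dR_sub_dR_le (p p' r : Heis) : |dR p r - dR p' r| ≤ dR p p' := by
  rw [abs_sub_le_iff]
  constructor
  · linarith [dR_triangle p p' r]
  · linarith [dR_triangle p' p r, dR_comm p' p]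

lemma dL_q₀_translate (a : ℝ) : dL q₀ (1 + a, 1, -a / 2) = |a| := by
  have h : Hmul (Hinv q₀) (1 + a, 1, -a / 2) = (a, 0, 0) := by
    simp only [Hmul, Hinv, q₀, Prod.ext_iff]
    refine ⟨by ring, by ring, by ring⟩
  rw [dL, h, kGauge_horizontal]

lemma two_mul_sqrt_abs_le_dR_translate_q₀ (a : ℝ) :
    2 * √|a| ≤ dR (1 + a, 1, -a / 2) q₀ := by
  have h : Hmul (1 + a, 1, -a / 2) (Hinv q₀) = (a, 0, -a) := by
    simp only [Hmul, Hinv, q₀, Prod.ext_iff]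
    refine ⟨by ring, by ring, by ring⟩
  rw [dR, h]
  simpa [abs_neg] using two_mul_sqrt_abs_le_kGauge (a, 0, -a)

/-- The function `f(p) = d_R(p, q₀)` is 1-Lipschitz for `d_R` but not Lipschitz for `d_L`. -/
theorem dR_dist_lipschitz_dR_not_dL :
    (∀ p p' : Heis, |dR p q₀ - dR p' q₀| ≤ dR p p') ∧
    ¬ ∃ L : ℝ, 0 < L ∧ ∀ p p' : Heis, |dR p q₀ - dR p' q₀| ≤ L * dL p p' := by
  refine ⟨fun p p' => abs_dR_sub_dR_le p p' q₀, ?_⟩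
  rintro ⟨L, hL, hLip⟩
  have hL' : 0 < L⁻¹ := inv_pos.mpr hL
  have hupper := hLip q₀ (1 + L⁻¹ ^ 2, 1, -L⁻¹ ^ 2 / 2)
  rw [dR_self, zero_sub, abs_neg, dL_q₀_translate, abs_of_nonneg (dR_nonneg _ _)] at hupper
  have hlower := two_mul_sqrt_abs_le_dR_translate_q₀ (L⁻¹ ^ 2)
  rw [abs_of_nonneg (sq_nonneg _)] at hlower hupper
  rw [Real.sqrt_sq hL'.le] at hlower
  have : L * L⁻¹ ^ 2 = L⁻¹ := by field_simp
  linarith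
end
end

section
/- Let f: ℍ → ℝ be either even or vertically even, and let L > 0. Then |f(p) − f(q)| ≤ L·d_L(p,q) holds for all p, q ∈ ℍ if and only if |f(p) − f(q)| ≤ L·d_R(p,q) holds for all p, q ∈ ℍ. In particular, f is Lipschitz continuous with respect to d_L if and only if it is Lipschitz continuous with respect to d_R. -/
noncomputable section

/-- The reflection `p̄ = (x, y, -z)`. -/
def vflip (p : Heis) : Heis := (p.1, p.2.1, -p.2.2)

/-- `f` is even (symmetric about the origin): `f(p) = f(p⁻¹)`. -/
def IsEvenH (f : Heis → ℝ) : Prop := ∀ p : Heis, f p = f (Hinv p)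

/-- `f` is vertically even: `f(x,y,z) = f(x,y,-z)`. -/
def IsVertEvenH (f : Heis → ℝ) : Prop := ∀ p : Heis, f p = f (vflip p)

lemma dL_inv (p q : Heis) : dL (Hinv p) (Hinv q) = dR p q := by
  simp only [dL, dR, Hinv, Hmul, kGauge]
  ring_nf

lemma dR_inv (p q : Heis) : dR (Hinv p) (Hinv q) = dL p q := by
  simp only [dL, dR, Hinv, Hmul, kGauge]
  ring_nf

lemma dL_vflip (p q : Heis) : dL (vflip p) (vflip q) = dR p q := by
  simp only [dL, dR, Hinv, Hmul, vflip, kGauge]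
  ring_nf

lemma dR_vflip (p q : Heis) : dR (vflip p) (vflip q) = dL p q := by
  simp only [dL, dR, Hinv, Hmul, vflip, kGauge]
  ring_nf

/-- For an even or vertically even function, Lipschitz continuity with constant `L`
with respect to `d_L` is equivalent to Lipschitz continuity with constant `L` with
respect to `d_R`. -/
theorem lipschitz_dL_iff_dR_of_even (f : Heis → ℝ) (hf : IsEvenH f ∨ IsVertEvenH f)
    (L : ℝ) (hL : 0 < L) :
    (∀ p q : Heis, |f p - f q| ≤ L * dL p q) ↔ (∀ p q : Heis, |f p - f q| ≤ L * dR p q) := by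
  rcases hf with hf | hf
  · constructor
    · intro h p q
      rw [hf p, hf q, ← dL_inv p q]
      exact h _ _
    · intro h p q
      rw [hf p, hf q, ← dR_inv p q]
      exact h _ _
  · constructor
    · intro h p q
      rw [hf p, hf q, ← dL_vflip p q]
      exact h _ _
    · intro h p q
      rw [hf p, hf q, ← dR_vflip p q]
      exact h _ _
end
end

section
/- The function f(x,y,z) = x²y² + 2z² on ℍ is h-convex; more precisely, for every p = (x,y,z) ∈ ℍ and every h = (h₁,h₂,0) ∈ ℍ₀ one has f(p·h) + f(p·h⁻¹) = 2f(p) + 3(xh₂ + yh₁)² + 2h₁²h₂² ≥ 2f(p). Moreover, f is not convex as a function on ℝ³ with its usual (Euclidean) structure. -/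
noncomputable section

/-- The function `f(x,y,z) = x²y² + 2z²`. -/
def fex (p : Heis) : ℝ := p.1 ^ 2 * p.2.1 ^ 2 + 2 * p.2.2 ^ 2

/-- `f(x,y,z) = x²y² + 2z²` is h-convex: for `p = (x,y,z)` and horizontal `h = (h₁,h₂,0)`,
`f(p·h) + f(p·h⁻¹) = 2f(p) + 3(xh₂ + yh₁)² + 2h₁²h₂² ≥ 2f(p)`; but `f` is not convex on
`ℝ³` in the Euclidean sense. -/
theorem fex_hConvex_not_euclidean_convex :
    (∀ p : Heis, ∀ h₁ h₂ : ℝ,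
      fex (Hmul p (h₁, h₂, 0)) + fex (Hmul p (Hinv (h₁, h₂, 0)))
          = 2 * fex p + 3 * (p.1 * h₂ + p.2.1 * h₁) ^ 2 + 2 * h₁ ^ 2 * h₂ ^ 2 ∧
      2 * fex p ≤ fex (Hmul p (h₁, h₂, 0)) + fex (Hmul p (Hinv (h₁, h₂, 0)))) ∧
    ¬ ConvexOn ℝ Set.univ fex := by
  constructor
  · intro p h₁ h₂
    constructor
    · simp only [fex, Hmul, Hinv]
      ring
    · simp only [fex, Hmul, Hinv]
      nlinarith [sq_nonneg (p.1 * h₂ + p.2.1 * h₁), sq_nonneg (h₁ * h₂)]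
  · intro hc
    have := hc.2 (Set.mem_univ (((2:ℝ),0,0) : Heis)) (Set.mem_univ (((0:ℝ),2,0) : Heis))
      (by norm_num : (0:ℝ) ≤ 1/2) (by norm_num : (0:ℝ) ≤ 1/2)
      (by norm_num : (1:ℝ)/2 + 1/2 = 1)
    simp only [fex, Prod.smul_mk, Prod.mk_add_mk, smul_eq_mul] at this
    norm_num at this
end
end

section
/- Let u₀(x,y,z) = x²y² + 2z², which is h-convex on ℍ, and for t > 0 define u_t(p) = u₀(p·(t,t,0)), so that u_t(x,y,z) = (x+t)²(y+t)² + 2(z + ½xt − ½yt)². Then for every t > 0 the function u_t is not h-convex: for p = (t,t,0) and h = (s,−s,0) with 0 < s² < 8t², one has u_t(p·h) + u_t(p·h⁻¹) = 2(4t² − s²)² < 32t⁴ = 2u_t(p). -/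
noncomputable section

/-- Horizontal convexity (h-convexity) of a function on the Heisenberg group. -/
def HConvex (u : Heis → ℝ) : Prop :=
  ∀ p : Heis, ∀ h₁ h₂ : ℝ,
    u (Hmul p (Hinv (h₁, h₂, 0))) + u (Hmul p (h₁, h₂, 0)) ≥ 2 * u p

/-- The h-convex initial datum `u₀(x,y,z) = x²y² + 2z²`. -/
def u0ex (p : Heis) : ℝ := p.1 ^ 2 * p.2.1 ^ 2 + 2 * p.2.2 ^ 2

/-- Its right translation `u_t(p) = u₀(p·(t,t,0))`. -/
def uT (t : ℝ) (p : Heis) : ℝ := u0ex (Hmul p (t, t, 0))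

/-- For every `t > 0` the right translation `u_t` of the h-convex datum `u₀` fails to be
h-convex; quantitatively, for `p = (t,t,0)`, `h = (s,-s,0)` with `0 < s² < 8t²`, one has
`u_t(p·h) + u_t(p·h⁻¹) = 2(4t² - s²)² < 32t⁴ = 2u_t(p)`. -/
theorem translation_destroys_hConvexity :
    ∀ t : ℝ, 0 < t →
      ¬ HConvex (uT t) ∧
      ∀ s : ℝ, 0 < s ^ 2 → s ^ 2 < 8 * t ^ 2 →
        uT t (Hmul (t, t, 0) (s, -s, 0)) + uT t (Hmul (t, t, 0) (Hinv (s, -s, 0)))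
            = 2 * (4 * t ^ 2 - s ^ 2) ^ 2 ∧
        2 * (4 * t ^ 2 - s ^ 2) ^ 2 < 32 * t ^ 4 ∧
        (32 : ℝ) * t ^ 4 = 2 * uT t (t, t, 0) := by
  intro t ht
  have key : ∀ s : ℝ,
      uT t (Hmul (t, t, 0) (s, -s, 0)) + uT t (Hmul (t, t, 0) (Hinv (s, -s, 0)))
        = 2 * (4 * t ^ 2 - s ^ 2) ^ 2 := by
    intro s
    simp only [uT, u0ex, Hmul, Hinv]
    ring
  refine ⟨?_, fun s hs1 hs2 => ⟨key s, by nlinarith, by simp only [uT, u0ex, Hmul]; ring⟩⟩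
  intro hc
  have h := hc (t, t, 0) t (-t)
  have hk := key t
  have h2 : (2 : ℝ) * uT t (t, t, 0) = 32 * t ^ 4 := by
    simp only [uT, u0ex, Hmul]; ring
  have : uT t (Hmul (t, t, 0) (Hinv (t, -t, 0))) + uT t (Hmul (t, t, 0) (t, -t, 0))
      = 2 * (4 * t ^ 2 - t ^ 2) ^ 2 := by linarith [key t]
  nlinarith [this, h, h2, pow_pos ht 4]
end
end

section
/- Let u: ℍ → ℝ be either even or vertically even. Then u is h-convex on ℍ if and only if u is right invariant h-convex on ℍ. -/
noncomputable section

/-- Right invariant horizontal convexity. -/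
def RightHConvex (u : Heis → ℝ) : Prop :=
  ∀ p : Heis, ∀ h₁ h₂ : ℝ,
    u (Hmul (Hinv (h₁, h₂, 0)) p) + u (Hmul (h₁, h₂, 0) p) ≥ 2 * u p


lemma hinv_mul (a b : Heis) : Hinv (Hmul a b) = Hmul (Hinv b) (Hinv a) := by
  simp only [Hinv, Hmul, Prod.mk.injEq]
  refine ⟨by ring, by ring, by ring⟩

lemma hinv_hinv (a : Heis) : Hinv (Hinv a) = a := by
  simp [Hinv]

lemma mul_vflip (h p : Heis) (hz : h.2.2 = 0) :
    Hmul h p = vflip (Hmul (vflip p) h) := by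
  simp only [Hmul, vflip, Prod.mk.injEq]
  refine ⟨by ring, by ring, by rw [hz]; ring⟩

lemma mul_vflip' (h p : Heis) (hz : h.2.2 = 0) :
    Hmul p h = vflip (Hmul h (vflip p)) := by
  simp only [Hmul, vflip, Prod.mk.injEq]
  refine ⟨by ring, by ring, by rw [hz]; ring⟩

/-- For an even or vertically even function, h-convexity and right invariant h-convexity
are equivalent. -/
theorem hConvex_iff_rightHConvex_of_even (u : Heis → ℝ)
    (hu : IsEvenH u ∨ IsVertEvenH u) :
    HConvex u ↔ RightHConvex u := by
  have hz : ∀ h₁ h₂ : ℝ, ((h₁, h₂, (0:ℝ)) : Heis).2.2 = 0 := fun _ _ => rfl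
  have hz' : ∀ h₁ h₂ : ℝ, (Hinv (h₁, h₂, (0:ℝ))).2.2 = 0 := fun _ _ => neg_zero
  constructor
  · intro hc p h₁ h₂
    rcases hu with he | hv
    · have e1 : u (Hmul (Hinv (h₁, h₂, 0)) p) = u (Hmul (Hinv p) (h₁, h₂, 0)) := by
        rw [he, hinv_mul, hinv_hinv]
      have e2 : u (Hmul (h₁, h₂, 0) p) = u (Hmul (Hinv p) (Hinv (h₁, h₂, 0))) := by
        rw [he, hinv_mul]
      rw [e1, e2, he p]
      linarith [hc (Hinv p) h₁ h₂]
    · have e1 : u (Hmul (Hinv (h₁, h₂, 0)) p) = u (Hmul (vflip p) (Hinv (h₁, h₂, 0))) := by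
        rw [mul_vflip _ _ (hz' h₁ h₂), ← hv]
      have e2 : u (Hmul (h₁, h₂, 0) p) = u (Hmul (vflip p) (h₁, h₂, 0)) := by
        rw [mul_vflip _ _ (hz h₁ h₂), ← hv]
      rw [e1, e2, hv p]
      linarith [hc (vflip p) h₁ h₂]
  · intro hc p h₁ h₂
    rcases hu with he | hv
    · have e1 : u (Hmul p (Hinv (h₁, h₂, 0))) = u (Hmul (h₁, h₂, 0) (Hinv p)) := by
        rw [he, hinv_mul, hinv_hinv]
      have e2 : u (Hmul p (h₁, h₂, 0)) = u (Hmul (Hinv (h₁, h₂, 0)) (Hinv p)) := by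
        rw [he, hinv_mul]
      rw [e1, e2, he p]
      linarith [hc (Hinv p) h₁ h₂]
    · have e1 : u (Hmul p (Hinv (h₁, h₂, 0))) = u (Hmul (Hinv (h₁, h₂, 0)) (vflip p)) := by
        rw [mul_vflip' _ _ (hz' h₁ h₂), ← hv]
      have e2 : u (Hmul p (h₁, h₂, 0)) = u (Hmul (h₁, h₂, 0) (vflip p)) := by
        rw [mul_vflip' _ _ (hz h₁ h₂), ← hv]
      rw [e1, e2, hv p]
      linarith [hc (vflip p) h₁ h₂]
end
end

section
/- Define u(x,y,z,t) = (x+t)²(y+t)² + 2(z + ½xt − ½yt)². Then for every t ≥ 0 the function u(·,t) is right invariant h-convex on ℍ; more precisely, for all p = (x,y,z) ∈ ℍ and h = (h₁,h₂,0) ∈ ℍ₀, u(h⁻¹·p, t) + u(h·p, t) = 2u(p,t) + 3(h₁(y+t) + h₂(x+t))² + 2h₁²h₂² ≥ 2u(p,t). -/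
noncomputable section

/-- The solution `u(x,y,z,t) = (x+t)²(y+t)² + 2(z + xt/2 - yt/2)²` of the linear transport
equation. -/
def u12 (p : Heis) (t : ℝ) : ℝ :=
  (p.1 + t) ^ 2 * (p.2.1 + t) ^ 2 + 2 * (p.2.2 + p.1 * t / 2 - p.2.1 * t / 2) ^ 2

/-- For every `t ≥ 0`, `u(·,t)` is right invariant h-convex; quantitatively,
`u(h⁻¹·p, t) + u(h·p, t) = 2u(p,t) + 3(h₁(y+t) + h₂(x+t))² + 2h₁²h₂² ≥ 2u(p,t)`. -/
theorem u12_rightHConvex :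
    ∀ t : ℝ, 0 ≤ t → ∀ p : Heis, ∀ h₁ h₂ : ℝ,
      u12 (Hmul (Hinv (h₁, h₂, 0)) p) t + u12 (Hmul (h₁, h₂, 0) p) t
          = 2 * u12 p t + 3 * (h₁ * (p.2.1 + t) + h₂ * (p.1 + t)) ^ 2
            + 2 * h₁ ^ 2 * h₂ ^ 2 ∧
      2 * u12 p t ≤ u12 (Hmul (Hinv (h₁, h₂, 0)) p) t + u12 (Hmul (h₁, h₂, 0) p) t := by
  intro t ht p h₁ h₂
  obtain ⟨x, y, z⟩ := p
  have key : u12 (Hmul (Hinv (h₁, h₂, 0)) (x, y, z)) t + u12 (Hmul (h₁, h₂, 0) (x, y, z)) t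
      = 2 * u12 (x, y, z) t + 3 * (h₁ * (y + t) + h₂ * (x + t)) ^ 2
        + 2 * h₁ ^ 2 * h₂ ^ 2 := by
    simp only [u12, Hmul, Hinv]
    ring
  refine ⟨key, ?_⟩
  rw [key]
  nlinarith [sq_nonneg (h₁ * (y + t) + h₂ * (x + t)), sq_nonneg (h₁ * h₂)]
end
end

section
/- Let u(x,y,z,t) = (x²+y²)² − 8z² + 12(x²+y²)t + 24t². Then for every t ≥ 0 the function u(·,t) is h-convex on ℍ: for all p ∈ ℍ and h ∈ ℍ₀, u(p·h⁻¹, t) + u(p·h, t) ≥ 2u(p,t). In particular, the initial datum u₀(x,y,z) = (x²+y²)² − 8z² is h-convex on ℍ. -/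
noncomputable section

/-- The function `u(x,y,z,t) = (x²+y²)² - 8z² + 12(x²+y²)t + 24t²`. -/
def u14 (p : Heis) (t : ℝ) : ℝ :=
  (p.1 ^ 2 + p.2.1 ^ 2) ^ 2 - 8 * p.2.2 ^ 2 + 12 * (p.1 ^ 2 + p.2.1 ^ 2) * t + 24 * t ^ 2

lemma u14_hconv (t : ℝ) (ht : 0 ≤ t) : HConvex (fun p => u14 p t) := by
  rintro ⟨x, y, z⟩ a b
  simp only [u14, Hmul, Hinv]
  nlinarith [sq_nonneg (x*a + y*b), sq_nonneg (a^2 + b^2), sq_nonneg a, sq_nonneg b,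
    mul_nonneg ht (add_nonneg (sq_nonneg a) (sq_nonneg b))]

/-- For every `t ≥ 0`, `u14(·,t)` is h-convex; in particular the initial datum
`u₀(x,y,z) = (x²+y²)² - 8z²` is h-convex. -/
theorem u14_hConvexity_preserved :
    (∀ t : ℝ, 0 ≤ t → HConvex (fun p => u14 p t)) ∧
    HConvex (fun p : Heis => (p.1 ^ 2 + p.2.1 ^ 2) ^ 2 - 8 * p.2.2 ^ 2) := by
  refine ⟨u14_hconv, ?_⟩
  have h := u14_hconv 0 le_rfl
  intro p h₁ h₂
  have := h p h₁ h₂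
  simpa [u14] using this
end
end

section
/- The function p ↦ ⟨p⟩ is smooth on ℍ, its horizontal gradient at p = (x,y,z) equals ∇_H⟨p⟩ = ((x³ − 4yz)/⟨p⟩³, (y³ + 4xz)/⟨p⟩³), and there exists a constant μ > 0 such that |∇_H⟨p⟩| ≤ μ and the operator norm of the symmetrized horizontal Hessian (∇_H²⟨·⟩)*(p) is at most μ, for all p ∈ ℍ. -/
noncomputable section

/-- The horizontal vector field `X₁ = ∂ₓ - (y/2)∂_z` applied to `f` at `p`. -/
def X1 (f : Heis → ℝ) (p : Heis) : ℝ := fderiv ℝ f p (1, 0, -p.2.1 / 2)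

/-- The horizontal vector field `X₂ = ∂_y + (x/2)∂_z` applied to `f` at `p`. -/
def X2 (f : Heis → ℝ) (p : Heis) : ℝ := fderiv ℝ f p (0, 1, p.1 / 2)

/-- The symmetrized horizontal Hessian `(∇_H² f)*`. -/
def hessH (f : Heis → ℝ) (p : Heis) : Matrix (Fin 2) (Fin 2) ℝ :=
  !![X1 (X1 f) p, (X1 (X2 f) p + X2 (X1 f) p) / 2;
     (X1 (X2 f) p + X2 (X1 f) p) / 2, X2 (X2 f) p]

/-- `⟨p⟩ = (1 + x⁴ + y⁴ + 16z²)^(1/4)`. -/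
def bracket (p : Heis) : ℝ := (1 + p.1 ^ 4 + p.2.1 ^ 4 + 16 * p.2.2 ^ 2) ^ ((1 : ℝ) / 4)

namespace HP
def Q (p : Heis) : ℝ := 1 + p.1 ^ 4 + p.2.1 ^ 4 + 16 * p.2.2 ^ 2

lemma one_le_Q (p : Heis) : 1 ≤ Q p := by
  have := sq_nonneg (p.1 ^ 2); have := sq_nonneg (p.2.1 ^ 2); have := sq_nonneg p.2.2
  unfold Q; nlinarith

lemma Q_pos (p : Heis) : 0 < Q p := lt_of_lt_of_le one_pos (one_le_Q p)

lemma hasFDerivAt_x (p : Heis) : HasFDerivAt (fun q : Heis => q.1)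
    (ContinuousLinearMap.fst ℝ ℝ (ℝ × ℝ)) p := hasFDerivAt_fst

lemma hasFDerivAt_y (p : Heis) : HasFDerivAt (fun q : Heis => q.2.1)
    ((ContinuousLinearMap.fst ℝ ℝ ℝ).comp (ContinuousLinearMap.snd ℝ ℝ (ℝ × ℝ))) p :=
  hasFDerivAt_fst.comp p hasFDerivAt_snd

lemma hasFDerivAt_z (p : Heis) : HasFDerivAt (fun q : Heis => q.2.2)
    ((ContinuousLinearMap.snd ℝ ℝ ℝ).comp (ContinuousLinearMap.snd ℝ ℝ (ℝ × ℝ))) p :=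
  hasFDerivAt_snd.comp p hasFDerivAt_snd

def QL (p : Heis) : Heis →L[ℝ] ℝ :=
  ((4:ℝ) * p.1 ^ 3) • (ContinuousLinearMap.fst ℝ ℝ (ℝ × ℝ))
    + ((4:ℝ) * p.2.1 ^ 3) • ((ContinuousLinearMap.fst ℝ ℝ ℝ).comp (ContinuousLinearMap.snd ℝ ℝ (ℝ × ℝ)))
    + ((32:ℝ) * p.2.2) • ((ContinuousLinearMap.snd ℝ ℝ ℝ).comp (ContinuousLinearMap.snd ℝ ℝ (ℝ × ℝ)))

lemma QL_apply (p : Heis) (v : Heis) :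
    QL p v = 4 * p.1 ^ 3 * v.1 + 4 * p.2.1 ^ 3 * v.2.1 + 32 * p.2.2 * v.2.2 := by
  simp only [QL, ContinuousLinearMap.add_apply, ContinuousLinearMap.smul_apply,
    ContinuousLinearMap.coe_comp', Function.comp_apply, ContinuousLinearMap.coe_fst',
    ContinuousLinearMap.coe_snd', smul_eq_mul]

lemma hQ (p : Heis) : HasFDerivAt Q (QL p) p := by
  have h1 := ((hasDerivAt_pow 4 p.1).comp_hasFDerivAt p (hasFDerivAt_x p)).const_add (1:ℝ)
  have h2 := (hasDerivAt_pow 4 p.2.1).comp_hasFDerivAt p (hasFDerivAt_y p)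
  have h3 := ((hasDerivAt_pow 2 p.2.2).comp_hasFDerivAt p (hasFDerivAt_z p)).const_mul (16:ℝ)
  have h := (h1.add h2).add h3
  have he : HasFDerivAt Q _ p := h
  refine he.congr_fderiv (ContinuousLinearMap.ext fun v => ?_)
  simp only [QL, ContinuousLinearMap.add_apply, ContinuousLinearMap.smul_apply,
    ContinuousLinearMap.coe_comp', Function.comp_apply, ContinuousLinearMap.coe_fst',
    ContinuousLinearMap.coe_snd', smul_eq_mul]
  push_cast
  ring

lemma hB (p : Heis) : HasFDerivAt bracket
    ((((1:ℝ)/4) * Q p ^ ((1:ℝ)/4 - 1)) • QL p) p :=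
  (hQ p).rpow_const (Or.inl (Q_pos p).ne')

lemma X1_bracket (p : Heis) :
    X1 bracket p = (p.1 ^ 3 - 4 * p.2.1 * p.2.2) * Q p ^ (-(3:ℝ)/4) := by
  rw [X1, (hB p).fderiv, ContinuousLinearMap.smul_apply, QL_apply,
    show ((1:ℝ)/4 - 1) = -(3:ℝ)/4 by norm_num]
  simp only [smul_eq_mul]
  ring

lemma X2_bracket (p : Heis) :
    X2 bracket p = (p.2.1 ^ 3 + 4 * p.1 * p.2.2) * Q p ^ (-(3:ℝ)/4) := by
  rw [X2, (hB p).fderiv, ContinuousLinearMap.smul_apply, QL_apply,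
    show ((1:ℝ)/4 - 1) = -(3:ℝ)/4 by norm_num]
  simp only [smul_eq_mul]
  ring
end HP
namespace HP
def g1 (p : Heis) : ℝ := (p.1 ^ 3 - 4 * p.2.1 * p.2.2) * Q p ^ (-(3:ℝ)/4)
def g2 (p : Heis) : ℝ := (p.2.1 ^ 3 + 4 * p.1 * p.2.2) * Q p ^ (-(3:ℝ)/4)

lemma X1_bracket_fun : X1 bracket = g1 := funext X1_bracket
lemma X2_bracket_fun : X2 bracket = g2 := funext X2_bracket

lemma hR (p : Heis) : HasFDerivAt (fun q => Q q ^ (-(3:ℝ)/4))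
    ((-(3:ℝ)/4 * Q p ^ (-(3:ℝ)/4 - 1)) • QL p) p :=
  (hQ p).rpow_const (Or.inl (Q_pos p).ne')

lemma hP1 (p : Heis) : HasFDerivAt (fun q : Heis => q.1 ^ 3 - 4 * q.2.1 * q.2.2)
    (((3:ℕ) * p.1 ^ 2 : ℝ) • (ContinuousLinearMap.fst ℝ ℝ (ℝ × ℝ))
      - (4:ℝ) • (p.2.1 • ((ContinuousLinearMap.snd ℝ ℝ ℝ).comp (ContinuousLinearMap.snd ℝ ℝ (ℝ × ℝ)))
          + p.2.2 • ((ContinuousLinearMap.fst ℝ ℝ ℝ).comp (ContinuousLinearMap.snd ℝ ℝ (ℝ × ℝ))))) p := by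
  have h := ((hasDerivAt_pow 3 p.1).comp_hasFDerivAt p (hasFDerivAt_x p)).sub
    (((hasFDerivAt_y p).mul (hasFDerivAt_z p)).const_mul (4:ℝ))
  convert h using 2
  all_goals (try simp only [Function.comp_def, Pi.sub_apply, Pi.add_apply, Pi.mul_apply]; try ring)
  all_goals rfl

lemma hg1 (p : Heis) : HasFDerivAt g1
    ((p.1 ^ 3 - 4 * p.2.1 * p.2.2) • ((-(3:ℝ)/4 * Q p ^ (-(3:ℝ)/4 - 1)) • QL p)
      + (Q p ^ (-(3:ℝ)/4)) • (((3:ℕ) * p.1 ^ 2 : ℝ) • (ContinuousLinearMap.fst ℝ ℝ (ℝ × ℝ))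
      - (4:ℝ) • (p.2.1 • ((ContinuousLinearMap.snd ℝ ℝ ℝ).comp (ContinuousLinearMap.snd ℝ ℝ (ℝ × ℝ)))
          + p.2.2 • ((ContinuousLinearMap.fst ℝ ℝ ℝ).comp (ContinuousLinearMap.snd ℝ ℝ (ℝ × ℝ)))))) p :=
  (hP1 p).mul (hR p)

lemma X1_g1 (p : Heis) :
    X1 g1 p = (3 * p.1 ^ 2 + 2 * p.2.1 ^ 2) * Q p ^ (-(3:ℝ)/4)
      - 3 * (p.1 ^ 3 - 4 * p.2.1 * p.2.2) ^ 2 * Q p ^ (-(7:ℝ)/4) := by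
  rw [X1, (hg1 p).fderiv]
  simp only [ContinuousLinearMap.add_apply, ContinuousLinearMap.smul_apply,
    ContinuousLinearMap.sub_apply, QL_apply, ContinuousLinearMap.coe_comp',
    Function.comp_apply, ContinuousLinearMap.coe_fst', ContinuousLinearMap.coe_snd',
    smul_eq_mul, show (-(3:ℝ)/4 - 1) = -(7:ℝ)/4 by norm_num]
  push_cast
  ring

lemma X2_g1 (p : Heis) :
    X2 g1 p = (-(4 * p.2.2) - 2 * p.1 * p.2.1) * Q p ^ (-(3:ℝ)/4)
      - 3 * (p.1 ^ 3 - 4 * p.2.1 * p.2.2) * (p.2.1 ^ 3 + 4 * p.1 * p.2.2) * Q p ^ (-(7:ℝ)/4) := by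
  rw [X2, (hg1 p).fderiv]
  simp only [ContinuousLinearMap.add_apply, ContinuousLinearMap.smul_apply,
    ContinuousLinearMap.sub_apply, QL_apply, ContinuousLinearMap.coe_comp',
    Function.comp_apply, ContinuousLinearMap.coe_fst', ContinuousLinearMap.coe_snd',
    smul_eq_mul, show (-(3:ℝ)/4 - 1) = -(7:ℝ)/4 by norm_num]
  push_cast
  ring

lemma hP2 (p : Heis) : HasFDerivAt (fun q : Heis => q.2.1 ^ 3 + 4 * q.1 * q.2.2)
    (((3:ℕ) * p.2.1 ^ 2 : ℝ) • ((ContinuousLinearMap.fst ℝ ℝ ℝ).comp (ContinuousLinearMap.snd ℝ ℝ (ℝ × ℝ)))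
      + (4:ℝ) • (p.1 • ((ContinuousLinearMap.snd ℝ ℝ ℝ).comp (ContinuousLinearMap.snd ℝ ℝ (ℝ × ℝ)))
          + p.2.2 • (ContinuousLinearMap.fst ℝ ℝ (ℝ × ℝ)))) p := by
  have h := ((hasDerivAt_pow 3 p.2.1).comp_hasFDerivAt p (hasFDerivAt_y p)).add
    (((hasFDerivAt_x p).mul (hasFDerivAt_z p)).const_mul (4:ℝ))
  convert h using 2
  all_goals (try simp only [Function.comp_def, Pi.sub_apply, Pi.add_apply, Pi.mul_apply]; try ring)
  all_goals rfl

lemma hg2 (p : Heis) : HasFDerivAt g2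
    ((p.2.1 ^ 3 + 4 * p.1 * p.2.2) • ((-(3:ℝ)/4 * Q p ^ (-(3:ℝ)/4 - 1)) • QL p)
      + (Q p ^ (-(3:ℝ)/4)) • (((3:ℕ) * p.2.1 ^ 2 : ℝ) • ((ContinuousLinearMap.fst ℝ ℝ ℝ).comp (ContinuousLinearMap.snd ℝ ℝ (ℝ × ℝ)))
      + (4:ℝ) • (p.1 • ((ContinuousLinearMap.snd ℝ ℝ ℝ).comp (ContinuousLinearMap.snd ℝ ℝ (ℝ × ℝ)))
          + p.2.2 • (ContinuousLinearMap.fst ℝ ℝ (ℝ × ℝ))))) p :=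
  (hP2 p).mul (hR p)

lemma X1_g2 (p : Heis) :
    X1 g2 p = (4 * p.2.2 - 2 * p.1 * p.2.1) * Q p ^ (-(3:ℝ)/4)
      - 3 * (p.1 ^ 3 - 4 * p.2.1 * p.2.2) * (p.2.1 ^ 3 + 4 * p.1 * p.2.2) * Q p ^ (-(7:ℝ)/4) := by
  rw [X1, (hg2 p).fderiv]
  simp only [ContinuousLinearMap.add_apply, ContinuousLinearMap.smul_apply,
    ContinuousLinearMap.sub_apply, QL_apply, ContinuousLinearMap.coe_comp',
    Function.comp_apply, ContinuousLinearMap.coe_fst', ContinuousLinearMap.coe_snd',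
    smul_eq_mul, show (-(3:ℝ)/4 - 1) = -(7:ℝ)/4 by norm_num]
  push_cast
  ring

lemma X2_g2 (p : Heis) :
    X2 g2 p = (3 * p.2.1 ^ 2 + 2 * p.1 ^ 2) * Q p ^ (-(3:ℝ)/4)
      - 3 * (p.2.1 ^ 3 + 4 * p.1 * p.2.2) ^ 2 * Q p ^ (-(7:ℝ)/4) := by
  rw [X2, (hg2 p).fderiv]
  simp only [ContinuousLinearMap.add_apply, ContinuousLinearMap.smul_apply,
    ContinuousLinearMap.sub_apply, QL_apply, ContinuousLinearMap.coe_comp',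
    Function.comp_apply, ContinuousLinearMap.coe_fst', ContinuousLinearMap.coe_snd',
    smul_eq_mul, show (-(3:ℝ)/4 - 1) = -(7:ℝ)/4 by norm_num]
  push_cast
  ring
end HP
namespace HP
lemma contDiff_bracket : ContDiff ℝ (⊤ : ℕ∞) bracket := by
  have hQc : ContDiff ℝ (⊤ : ℕ∞) Q := by unfold Q; fun_prop
  rw [contDiff_iff_contDiffAt]
  intro p
  exact hQc.contDiffAt.rpow_const_of_ne (Q_pos p).ne'

lemma one_le_bracket (p : Heis) : 1 ≤ bracket p :=
  Real.one_le_rpow (one_le_Q p) (by norm_num)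

lemma pow_bracket (p : Heis) (n : ℕ) : bracket p ^ n = Q p ^ ((n : ℝ)/4) := by
  rw [show bracket p = Q p ^ ((1:ℝ)/4) from rfl, ← Real.rpow_natCast (Q p ^ ((1:ℝ)/4)) n,
    ← Real.rpow_mul (Q_pos p).le]
  rw [mul_comm]
  norm_num
  rw [mul_one_div]

lemma Q34 (p : Heis) : Q p ^ (-(3:ℝ)/4) = (bracket p ^ 3)⁻¹ := by
  rw [pow_bracket, show (-(3:ℝ)/4) = -((3:ℕ):ℝ)/4 by norm_num, neg_div,
    Real.rpow_neg (Q_pos p).le]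

lemma Q74 (p : Heis) : Q p ^ (-(7:ℝ)/4) = (bracket p ^ 7)⁻¹ := by
  rw [pow_bracket, show (-(7:ℝ)/4) = -((7:ℕ):ℝ)/4 by norm_num, neg_div,
    Real.rpow_neg (Q_pos p).le]
end HP
namespace HP
lemma bracket_pow_four (p : Heis) : bracket p ^ 4 = Q p := by
  rw [pow_bracket]; norm_num

lemma bracket_pos (p : Heis) : 0 < bracket p := lt_of_lt_of_le one_pos (one_le_bracket p)

lemma one_le_bracket_sq (p : Heis) : 1 ≤ bracket p ^ 2 :=
  by nlinarith [one_le_bracket p]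

lemma hx2 (p : Heis) : p.1 ^ 2 ≤ bracket p ^ 2 := by
  have h4 := bracket_pow_four p
  unfold Q at h4
  have := sq_nonneg (p.2.1 ^ 2); have := sq_nonneg p.2.2
  nlinarith [sq_nonneg (p.1 ^ 2 - bracket p ^ 2), one_le_bracket_sq p, sq_nonneg p.1]

lemma hy2 (p : Heis) : p.2.1 ^ 2 ≤ bracket p ^ 2 := by
  have h4 := bracket_pow_four p
  unfold Q at h4
  have := sq_nonneg (p.1 ^ 2); have := sq_nonneg p.2.2
  nlinarith [sq_nonneg (p.2.1 ^ 2 - bracket p ^ 2), one_le_bracket_sq p, sq_nonneg p.2.1]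

lemma hz2 (p : Heis) : 16 * p.2.2 ^ 2 ≤ bracket p ^ 4 := by
  have h4 := bracket_pow_four p
  have := sq_nonneg (p.1 ^ 2); have := sq_nonneg (p.2.1 ^ 2)
  unfold Q at h4; nlinarith

lemma absA (p : Heis) : |p.1 ^ 3 - 4 * p.2.1 * p.2.2| ≤ 2 * bracket p ^ 3 := by
  have h1 := hx2 p; have h2 := hy2 p; have h3 := hz2 p
  have ht := bracket_pos p
  rw [abs_le]
  constructor <;>
  nlinarith [mul_le_mul h1 h1 (sq_nonneg p.1) (sq_nonneg (bracket p)),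
    mul_le_mul h2 h3 (by positivity : (0:ℝ) ≤ 16 * p.2.2 ^ 2) (by positivity : (0:ℝ) ≤ bracket p ^ 2),
    sq_nonneg (p.1 ^ 3 - 4 * p.2.1 * p.2.2 + 2 * bracket p ^ 3),
    sq_nonneg (p.1 ^ 3 - 4 * p.2.1 * p.2.2 - 2 * bracket p ^ 3),
    sq_nonneg (p.1 * bracket p), pow_pos ht 3, pow_pos ht 6,
    sq_nonneg (p.1 ^ 3 + 4 * p.2.1 * p.2.2)]

lemma absB (p : Heis) : |p.2.1 ^ 3 + 4 * p.1 * p.2.2| ≤ 2 * bracket p ^ 3 := by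
  have h1 := hx2 p; have h2 := hy2 p; have h3 := hz2 p
  have ht := bracket_pos p
  rw [abs_le]
  constructor <;>
  nlinarith [mul_le_mul h2 h2 (sq_nonneg p.2.1) (sq_nonneg (bracket p)),
    mul_le_mul h1 h3 (by positivity : (0:ℝ) ≤ 16 * p.2.2 ^ 2) (by positivity : (0:ℝ) ≤ bracket p ^ 2),
    sq_nonneg (p.2.1 ^ 3 + 4 * p.1 * p.2.2 + 2 * bracket p ^ 3),
    sq_nonneg (p.2.1 ^ 3 + 4 * p.1 * p.2.2 - 2 * bracket p ^ 3),
    sq_nonneg (p.2.1 * bracket p), pow_pos ht 3, pow_pos ht 6,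
    sq_nonneg (p.2.1 ^ 3 - 4 * p.1 * p.2.2)]

lemma bound_helper {t u v : ℝ} (ht : 1 ≤ t) (hu : |u| ≤ 5 * t ^ 2) (hv : |v| ≤ 12 * t ^ 6) :
    |u * (t ^ 3)⁻¹ - v * (t ^ 7)⁻¹| ≤ 17 := by
  have ht0 : (0:ℝ) < t := lt_of_lt_of_le one_pos ht
  have h3 : (0:ℝ) < t ^ 3 := by positivity
  have h7 : (0:ℝ) < t ^ 7 := by positivity
  have e1 : |u| * (t ^ 3)⁻¹ ≤ 5 := by
    rw [← div_eq_mul_inv, div_le_iff₀ h3]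
    nlinarith [mul_nonneg (mul_nonneg (sub_nonneg.mpr ht) ht0.le) ht0.le]
  have e2 : |v| * (t ^ 7)⁻¹ ≤ 12 := by
    rw [← div_eq_mul_inv, div_le_iff₀ h7]
    nlinarith [mul_nonneg (mul_nonneg (sub_nonneg.mpr ht)
      (pow_nonneg ht0.le 3)) (pow_nonneg ht0.le 3)]
  calc |u * (t ^ 3)⁻¹ - v * (t ^ 7)⁻¹| ≤ |u * (t ^ 3)⁻¹| + |v * (t ^ 7)⁻¹| := abs_sub _ _
    _ = |u| * (t ^ 3)⁻¹ + |v| * (t ^ 7)⁻¹ := by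
        rw [abs_mul, abs_mul, abs_inv, abs_inv, abs_of_pos h3, abs_of_pos h7]
    _ ≤ 17 := by linarith
end HP
namespace HP
lemma habs4z (p : Heis) : |4 * p.2.2| ≤ bracket p ^ 2 := by
  have hs := one_le_bracket_sq p
  have hz := hz2 p
  rw [abs_le]
  constructor <;> nlinarith [sq_nonneg (4 * p.2.2 - bracket p ^ 2),
    sq_nonneg (4 * p.2.2 + bracket p ^ 2)]

lemma bd11 (p : Heis) : |X1 g1 p| ≤ 17 := by
  rw [X1_g1, Q34, Q74]
  apply bound_helper (one_le_bracket p)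
  · rw [abs_of_nonneg (by positivity)]
    nlinarith [hx2 p, hy2 p]
  · rw [abs_of_nonneg (by positivity)]
    nlinarith [absA p, abs_nonneg (p.1 ^ 3 - 4 * p.2.1 * p.2.2),
      sq_abs (p.1 ^ 3 - 4 * p.2.1 * p.2.2), pow_pos (bracket_pos p) 3]

lemma bd22 (p : Heis) : |X2 g2 p| ≤ 17 := by
  rw [X2_g2, Q34, Q74]
  apply bound_helper (one_le_bracket p)
  · rw [abs_of_nonneg (by positivity)]
    nlinarith [hx2 p, hy2 p]
  · rw [abs_of_nonneg (by positivity)]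
    nlinarith [absB p, abs_nonneg (p.2.1 ^ 3 + 4 * p.1 * p.2.2),
      sq_abs (p.2.1 ^ 3 + 4 * p.1 * p.2.2), pow_pos (bracket_pos p) 3]

lemma cross_bound (p : Heis) :
    |3 * (p.1 ^ 3 - 4 * p.2.1 * p.2.2) * (p.2.1 ^ 3 + 4 * p.1 * p.2.2)| ≤ 12 * bracket p ^ 6 := by
  rw [abs_mul, abs_mul, abs_of_nonneg (by norm_num : (0:ℝ) ≤ 3)]
  nlinarith [absA p, absB p, abs_nonneg (p.1 ^ 3 - 4 * p.2.1 * p.2.2),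
    abs_nonneg (p.2.1 ^ 3 + 4 * p.1 * p.2.2), pow_pos (bracket_pos p) 3]

lemma bd21 (p : Heis) : |X2 g1 p| ≤ 17 := by
  rw [X2_g1, Q34, Q74]
  apply bound_helper (one_le_bracket p)
  · have := abs_le.mp (habs4z p)
    rw [abs_le]
    constructor <;> nlinarith [hx2 p, hy2 p, sq_nonneg (p.1 - p.2.1), sq_nonneg (p.1 + p.2.1)]
  · exact cross_bound p
lemma bd12 (p : Heis) : |X1 g2 p| ≤ 17 := by
  rw [X1_g2, Q34, Q74]
  apply bound_helper (one_le_bracket p)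
  · have := abs_le.mp (habs4z p)
    rw [abs_le]
    constructor <;> nlinarith [hx2 p, hy2 p, sq_nonneg (p.1 - p.2.1), sq_nonneg (p.1 + p.2.1)]
  · exact cross_bound p

lemma gradX1 (p : Heis) : |X1 bracket p| ≤ 2 := by
  rw [X1_bracket, Q34, abs_mul, abs_inv, abs_of_pos (pow_pos (bracket_pos p) 3),
    ← div_eq_mul_inv, div_le_iff₀ (pow_pos (bracket_pos p) 3)]
  nlinarith [absA p]

lemma gradX2 (p : Heis) : |X2 bracket p| ≤ 2 := by
  rw [X2_bracket, Q34, abs_mul, abs_inv, abs_of_pos (pow_pos (bracket_pos p) 3),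
    ← div_eq_mul_inv, div_le_iff₀ (pow_pos (bracket_pos p) 3)]
  nlinarith [absB p]
end HP
/-- `⟨·⟩` is smooth, its horizontal gradient is `((x³-4yz)/⟨p⟩³, (y³+4xz)/⟨p⟩³)`, and both
the horizontal gradient and the symmetrized horizontal Hessian are bounded on `ℍ`
(the Hessian in operator norm). -/
theorem bracket_smooth_grad_bounded :
    ContDiff ℝ (⊤ : ℕ∞) bracket ∧
    (∀ p : Heis,
      (X1 bracket p, X2 bracket p)
        = ((p.1 ^ 3 - 4 * p.2.1 * p.2.2) / bracket p ^ 3,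
           (p.2.1 ^ 3 + 4 * p.1 * p.2.2) / bracket p ^ 3)) ∧
    ∃ μ : ℝ, 0 < μ ∧ ∀ p : Heis,
      Real.sqrt ((X1 bracket p) ^ 2 + (X2 bracket p) ^ 2) ≤ μ ∧
      ∀ w₁ w₂ : ℝ,
        Real.sqrt ((hessH bracket p 0 0 * w₁ + hessH bracket p 0 1 * w₂) ^ 2
            + (hessH bracket p 1 0 * w₁ + hessH bracket p 1 1 * w₂) ^ 2)
          ≤ μ * Real.sqrt (w₁ ^ 2 + w₂ ^ 2) := by
  refine ⟨HP.contDiff_bracket, fun p => ?_, 34, by norm_num, fun p => ⟨?_, fun w₁ w₂ => ?_⟩⟩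
  · rw [HP.X1_bracket, HP.X2_bracket, HP.Q34, ← div_eq_mul_inv, ← div_eq_mul_inv]
  · have h1 := HP.gradX1 p
    have h2 := HP.gradX2 p
    have : Real.sqrt ((X1 bracket p) ^ 2 + (X2 bracket p) ^ 2) ≤ Real.sqrt (34 ^ 2) := by
      apply Real.sqrt_le_sqrt
      nlinarith [sq_abs (X1 bracket p), sq_abs (X2 bracket p), abs_nonneg (X1 bracket p),
        abs_nonneg (X2 bracket p)]
    calc _ ≤ Real.sqrt (34 ^ 2) := this
      _ = 34 := Real.sqrt_sq (by norm_num)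
  · have h00 : hessH bracket p 0 0 = X1 HP.g1 p := by
      simp [hessH, HP.X1_bracket_fun]
    have h01 : hessH bracket p 0 1 = (X1 HP.g2 p + X2 HP.g1 p) / 2 := by
      simp [hessH, HP.X1_bracket_fun, HP.X2_bracket_fun]
    have h10 : hessH bracket p 1 0 = (X1 HP.g2 p + X2 HP.g1 p) / 2 := by
      simp [hessH, HP.X1_bracket_fun, HP.X2_bracket_fun]
    have h11 : hessH bracket p 1 1 = X2 HP.g2 p := by
      simp [hessH, HP.X2_bracket_fun]
    rw [h00, h01, h10, h11]
    set a := X1 HP.g1 p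
    set b := (X1 HP.g2 p + X2 HP.g1 p) / 2
    set d := X2 HP.g2 p
    have ha : |a| ≤ 17 := HP.bd11 p
    have hd : |d| ≤ 17 := HP.bd22 p
    have hb : |b| ≤ 17 := by
      have h1 := HP.bd12 p
      have h2 := HP.bd21 p
      calc |b| ≤ (|X1 HP.g2 p| + |X2 HP.g1 p|) / 2 := by
            rw [show b = (X1 HP.g2 p + X2 HP.g1 p) / 2 from rfl]
            rw [abs_div, abs_of_pos (by norm_num : (0:ℝ) < 2)]
            gcongr
            exact abs_add_le _ _
        _ ≤ 17 := by linarith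
    have ha2 : a ^ 2 ≤ 289 := by nlinarith [sq_abs a, abs_nonneg a]
    have hb2 : b ^ 2 ≤ 289 := by nlinarith [sq_abs b, abs_nonneg b]
    have hd2 : d ^ 2 ≤ 289 := by nlinarith [sq_abs d, abs_nonneg d]
    have hW : (0:ℝ) ≤ w₁ ^ 2 + w₂ ^ 2 := by positivity
    have key : (a * w₁ + b * w₂) ^ 2 + (b * w₁ + d * w₂) ^ 2 ≤ 1156 * (w₁ ^ 2 + w₂ ^ 2) := by
      nlinarith [sq_nonneg (a * w₂ - b * w₁), sq_nonneg (b * w₂ - d * w₁),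
        mul_le_mul_of_nonneg_right ha2 hW, mul_le_mul_of_nonneg_right hb2 hW,
        mul_le_mul_of_nonneg_right hd2 hW]
    calc Real.sqrt ((a * w₁ + b * w₂) ^ 2 + (b * w₁ + d * w₂) ^ 2)
        ≤ Real.sqrt (1156 * (w₁ ^ 2 + w₂ ^ 2)) := Real.sqrt_le_sqrt key
      _ = 34 * Real.sqrt (w₁ ^ 2 + w₂ ^ 2) := by
          rw [Real.sqrt_mul (by norm_num : (0:ℝ) ≤ 1156),
            show (1156:ℝ) = 34 ^ 2 by norm_num, Real.sqrt_sq (by norm_num : (0:ℝ) ≤ 34)]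
end
end

section
/- Let A be a 2×2 symmetric positive semidefinite real matrix, let C_f > 0, and let f: ℍ × ℝ² → ℝ satisfy |f(p,ξ)| ≤ C_f(1 + |ξ|) for all p ∈ ℍ and ξ ∈ ℝ². Then for every C > 0 and β > 0 there exists α₀ > 0 such that for all α ≥ α₀: the smooth function ū(p,t) = C·e^{αt + β⟨p⟩} + C_f·t satisfies ∂_t ū − tr(A·(∇_H²ū)*) + f(p, ∇_H ū) ≥ 0 at every (p,t) ∈ ℍ × (0,∞), and the function u̲(p,t) = −C·e^{αt + β⟨p⟩} − C_f·t satisfies ∂_t u̲ − tr(A·(∇_H²u̲)*) + f(p, ∇_H u̲) ≤ 0 at every (p,t) ∈ ℍ × (0,∞). (Here the horizontal derivatives act on the space variable.) -/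
noncomputable section

/-!
Write `b = ⟨p⟩`. Differentiating `b⁴ = 1 + x⁴ + y⁴ + 16z²` along the horizontal fields gives
`Xᵢ b = Nᵢ / b³` with `N₁ = x³ - 4yz`, `N₂ = y³ + 4xz`; since `|x|, |y| ≤ b` and `|4z| ≤ b²`,
this yields `|Xᵢ b| ≤ 2` and `|Xⱼ Xᵢ b| ≤ 5 / b + 12 / b ≤ 17`, uniformly on `ℍ`.
For a radial function `φ ∘ b` the chain rule gives
`Xⱼ Xᵢ (φ ∘ b) = φ''(b) Xⱼ b Xᵢ b + φ'(b) Xⱼ Xᵢ b`, so every horizontal derivative of `ū`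
of order one or two is bounded by a constant (depending on `β` only) times
`C β e^(αt + β⟨p⟩)`, whereas `∂ₜ ū = C α e^(αt + β⟨p⟩) + C_f`. Hence
`α ≥ β (Σ |aᵢⱼ| (4β + 17) + 4 C_f)` makes `ū` a supersolution. The subsolution `u̲ = -ū` is a
supersolution for `f̃(p, ξ) = -f(p, -ξ)`, which obeys the same growth bound.
-/

namespace HeisenbergBarrier

section DerivAlong

variable {E : Type*} [NormedAddCommGroup E] [NormedSpace ℝ E]

def derivAlong (V : E → E) (g : E → ℝ) (p : E) : ℝ := fderiv ℝ g p (V p)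

variable {V W : E → E} {g h : E → ℝ} {p : E}

theorem derivAlong_neg : derivAlong V (fun q => -g q) = fun q => -derivAlong V g q := by
  funext q
  simp [derivAlong]

theorem derivAlong_mul (hg : DifferentiableAt ℝ g p) (hh : DifferentiableAt ℝ h p) :
    derivAlong V (fun q => g q * h q) p = g p * derivAlong V h p + h p * derivAlong V g p := by
  simp [derivAlong, fderiv_fun_mul hg hh]

theorem derivAlong_comp {φ : ℝ → ℝ} {φ' : ℝ} (hφ : HasDerivAt φ φ' (g p))
    (hg : DifferentiableAt ℝ g p) :
    derivAlong V (fun q => φ (g q)) p = φ' * derivAlong V g p := by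
  have hφg : HasFDerivAt (fun q => φ (g q)) (φ' • fderiv ℝ g p) p :=
    hφ.comp_hasFDerivAt p hg.hasFDerivAt
  simp [derivAlong, hφg.fderiv]

theorem derivAlong_derivAlong_comp {φ φ' φ'' : ℝ → ℝ} (hφ : ∀ s, HasDerivAt φ (φ' s) s)
    (hφ' : ∀ s, HasDerivAt φ' (φ'' s) s) (hg : Differentiable ℝ g)
    (hVg : DifferentiableAt ℝ (derivAlong V g) p) :
    derivAlong W (derivAlong V (fun q => φ (g q))) p =
      φ'' (g p) * derivAlong W g p * derivAlong V g p
        + φ' (g p) * derivAlong W (derivAlong V g) p := by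
  have hVφg : derivAlong V (fun q => φ (g q)) = fun q => φ' (g q) * derivAlong V g q :=
    funext fun q => derivAlong_comp (hφ _) (hg q)
  rw [hVφg,
    derivAlong_mul (g := fun q => φ' (g q)) ((hφ' _).differentiableAt.comp p (hg p)) hVg,
    derivAlong_comp (hφ' _) (hg p)]
  ring

end DerivAlong

theorem abs_trace_mul_le {n : Type*} [Fintype n] (A M : Matrix n n ℝ) {m : ℝ}
    (hM : ∀ i j, |M i j| ≤ m) : |(A * M).trace| ≤ (∑ i, ∑ j, |A i j|) * m := by
  calc |(A * M).trace| = |∑ i, ∑ j, A i j * M j i| := by simp [Matrix.trace, Matrix.mul_apply]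
    _ ≤ ∑ i, ∑ j, |A i j * M j i| :=
      (Finset.abs_sum_le_sum_abs _ _).trans
        (Finset.sum_le_sum fun i _ => Finset.abs_sum_le_sum_abs _ _)
    _ ≤ ∑ i, ∑ j, |A i j| * m := by
      gcongr with i _ j _
      rw [abs_mul]
      exact mul_le_mul_of_nonneg_left (hM j i) (abs_nonneg _)
    _ = (∑ i, ∑ j, |A i j|) * m := by simp [Finset.sum_mul]

theorem sqrt_sq_add_sq_le_abs_add_abs (a b : ℝ) : Real.sqrt (a ^ 2 + b ^ 2) ≤ |a| + |b| :=
  Real.sqrt_le_iff.mpr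
    ⟨by positivity, by nlinarith [sq_abs a, sq_abs b, abs_nonneg a, abs_nonneg b]⟩

def horizFrame : Fin 2 → Heis → Heis :=
  ![fun p => (1, 0, -p.2.1 / 2), fun p => (0, 1, p.1 / 2)]

def X (i : Fin 2) : (Heis → ℝ) → Heis → ℝ := derivAlong (horizFrame i)

theorem X_zero : X 0 = X1 := rfl

theorem X_one : X 1 = X2 := rfl

theorem hessH_apply (g : Heis → ℝ) (p : Heis) (i j : Fin 2) :
    hessH g p i j = (X i (X j g) p + X j (X i g) p) / 2 := by
  fin_cases i <;> fin_cases j <;> simp [hessH, X_zero, X_one, add_self_div_two, add_comm]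

def bracketQuartic (p : Heis) : ℝ := 1 + p.1 ^ 4 + p.2.1 ^ 4 + 16 * p.2.2 ^ 2

theorem one_le_bracketQuartic (p : Heis) : 1 ≤ bracketQuartic p := by
  have : 0 ≤ p.1 ^ 4 + p.2.1 ^ 4 + 16 * p.2.2 ^ 2 := by positivity
  unfold bracketQuartic
  linarith

theorem bracket_eq_rpow (p : Heis) : bracket p = bracketQuartic p ^ (1 / 4 : ℝ) := rfl

theorem bracket_pow_four (p : Heis) : bracket p ^ 4 = bracketQuartic p := by
  rw [bracket_eq_rpow, ← Real.rpow_natCast,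
    ← Real.rpow_mul (zero_le_one.trans (one_le_bracketQuartic p))]
  norm_num

theorem one_le_bracket (p : Heis) : 1 ≤ bracket p :=
  Real.one_le_rpow (one_le_bracketQuartic p) (by norm_num)

theorem bracket_pos (p : Heis) : 0 < bracket p := one_pos.trans_le (one_le_bracket p)

theorem differentiable_bracket : Differentiable ℝ bracket := by
  have hquartic : Differentiable ℝ bracketQuartic := by
    unfold bracketQuartic
    fun_prop
  exact hquartic.rpow_const fun p => Or.inl (by linarith [one_le_bracketQuartic p])

theorem abs_fst_le_bracket (p : Heis) : |p.1| ≤ bracket p := by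
  refine le_of_pow_le_pow_left₀ four_ne_zero (bracket_pos p).le ?_
  rw [bracket_pow_four, Even.pow_abs (by decide), bracketQuartic]
  nlinarith [pow_two_nonneg (p.2.1 ^ 2), sq_nonneg p.2.2]

theorem abs_snd_fst_le_bracket (p : Heis) : |p.2.1| ≤ bracket p := by
  refine le_of_pow_le_pow_left₀ four_ne_zero (bracket_pos p).le ?_
  rw [bracket_pow_four, Even.pow_abs (by decide), bracketQuartic]
  nlinarith [pow_two_nonneg (p.1 ^ 2), sq_nonneg p.2.2]

theorem abs_four_mul_snd_snd_le_bracket_sq (p : Heis) : |4 * p.2.2| ≤ bracket p ^ 2 := by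
  refine le_of_pow_le_pow_left₀ two_ne_zero (by positivity) ?_
  rw [← pow_mul, bracket_pow_four, sq_abs, mul_pow, bracketQuartic]
  nlinarith [pow_two_nonneg (p.1 ^ 2), pow_two_nonneg (p.2.1 ^ 2)]

def bracketGradNum : Fin 2 → Heis → ℝ :=
  ![fun p => p.1 ^ 3 - 4 * p.2.1 * p.2.2, fun p => p.2.1 ^ 3 + 4 * p.1 * p.2.2]

theorem differentiable_bracketGradNum (i : Fin 2) : Differentiable ℝ (bracketGradNum i) := by
  fin_cases i <;> simp [bracketGradNum] <;> fun_prop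

theorem X_bracketQuartic (i : Fin 2) (p : Heis) :
    X i bracketQuartic p = 4 * bracketGradNum i p := by
  unfold bracketQuartic
  fin_cases i <;>
    simp (disch := fun_prop) [X, horizFrame, derivAlong, bracketGradNum,
      fderiv_fun_add, fderiv_fun_mul, fderiv_fun_pow, fderiv.fst, fderiv.snd] <;>
    ring

theorem abs_bracketGradNum_le (i : Fin 2) (p : Heis) :
    |bracketGradNum i p| ≤ 2 * bracket p ^ 3 := by
  have hb := (bracket_pos p).le
  have hz := abs_four_mul_snd_snd_le_bracket_sq p
  have hxxx : |p.1 ^ 3| ≤ bracket p ^ 3 := by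
    rw [abs_pow]; exact pow_le_pow_left₀ (abs_nonneg _) (abs_fst_le_bracket p) 3
  have hyyy : |p.2.1 ^ 3| ≤ bracket p ^ 3 := by
    rw [abs_pow]; exact pow_le_pow_left₀ (abs_nonneg _) (abs_snd_fst_le_bracket p) 3
  have hxz : |p.1 * (4 * p.2.2)| ≤ bracket p ^ 3 := by
    rw [abs_mul, pow_succ']
    exact mul_le_mul (abs_fst_le_bracket p) hz (by positivity) hb
  have hyz : |p.2.1 * (4 * p.2.2)| ≤ bracket p ^ 3 := by
    rw [abs_mul, pow_succ']
    exact mul_le_mul (abs_snd_fst_le_bracket p) hz (by positivity) hb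
  obtain ⟨hxxx₁, hxxx₂⟩ := abs_le.mp hxxx
  obtain ⟨hyyy₁, hyyy₂⟩ := abs_le.mp hyyy
  obtain ⟨hxz₁, hxz₂⟩ := abs_le.mp hxz
  obtain ⟨hyz₁, hyz₂⟩ := abs_le.mp hyz
  fin_cases i <;>
    simp only [bracketGradNum, Fin.zero_eta, Fin.mk_one, Matrix.cons_val_zero,
      Matrix.cons_val_one] <;>
    refine abs_le.mpr ⟨?_, ?_⟩ <;> linarith

def bracketHessNum (p : Heis) : Matrix (Fin 2) (Fin 2) ℝ :=
  !![3 * p.1 ^ 2 + 2 * p.2.1 ^ 2, -4 * p.2.2 - 2 * p.1 * p.2.1;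
     4 * p.2.2 - 2 * p.1 * p.2.1, 3 * p.2.1 ^ 2 + 2 * p.1 ^ 2]

theorem X_bracketGradNum (i j : Fin 2) (p : Heis) :
    X j (bracketGradNum i) p = bracketHessNum p i j := by
  fin_cases i <;> fin_cases j <;>
    simp (disch := fun_prop) [X, horizFrame, derivAlong, bracketGradNum, bracketHessNum,
      fderiv_fun_add, fderiv_fun_sub, fderiv_fun_mul, fderiv_fun_pow, fderiv.fst, fderiv.snd] <;>
    ring

theorem abs_bracketHessNum_le (i j : Fin 2) (p : Heis) :
    |bracketHessNum p i j| ≤ 5 * bracket p ^ 2 := by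
  obtain ⟨hx₁, hx₂⟩ := abs_le.mp (abs_fst_le_bracket p)
  obtain ⟨hy₁, hy₂⟩ := abs_le.mp (abs_snd_fst_le_bracket p)
  have hxx : p.1 ^ 2 ≤ bracket p ^ 2 := sq_le_sq' hx₁ hx₂
  have hyy : p.2.1 ^ 2 ≤ bracket p ^ 2 := sq_le_sq' hy₁ hy₂
  have hxy : |p.1 * p.2.1| ≤ bracket p ^ 2 := by
    rw [abs_mul, sq]
    exact mul_le_mul (abs_fst_le_bracket p) (abs_snd_fst_le_bracket p) (abs_nonneg _)
      (bracket_pos p).le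
  obtain ⟨hxy₁, hxy₂⟩ := abs_le.mp hxy
  obtain ⟨hz₁, hz₂⟩ := abs_le.mp (abs_four_mul_snd_snd_le_bracket_sq p)
  fin_cases i <;> fin_cases j <;>
    simp only [bracketHessNum, Fin.zero_eta, Fin.mk_one, Matrix.of_apply, Matrix.cons_val',
      Matrix.cons_val_zero, Matrix.cons_val_one, Matrix.cons_val_fin_one] <;>
    refine abs_le.mpr ⟨?_, ?_⟩ <;> linarith [sq_nonneg p.1, sq_nonneg p.2.1]

theorem X_bracket (i : Fin 2) (p : Heis) :
    X i bracket p = bracketGradNum i p / bracket p ^ 3 := by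
  have hchain := derivAlong_comp (V := horizFrame i) (hasDerivAt_pow 4 (bracket p))
    (differentiable_bracket p)
  have hquartic : (fun q => bracket q ^ 4) = bracketQuartic := funext bracket_pow_four
  rw [hquartic] at hchain
  change X i bracketQuartic p = _ * X i bracket p at hchain
  rw [X_bracketQuartic] at hchain
  have hb := (bracket_pos p).ne'
  field_simp
  push_cast at hchain
  linarith

theorem X_bracket_eq_mul_inv (i : Fin 2) :
    X i bracket = fun p => bracketGradNum i p * (bracket p ^ 3)⁻¹ :=
  funext fun p => X_bracket i p

theorem abs_X_bracket_le (i : Fin 2) (p : Heis) : |X i bracket p| ≤ 2 := by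
  have hb : 0 < bracket p ^ 3 := pow_pos (bracket_pos p) 3
  rw [X_bracket, abs_div, abs_of_pos hb, div_le_iff₀ hb]
  exact abs_bracketGradNum_le i p

theorem differentiable_X_bracket (i : Fin 2) : Differentiable ℝ (X i bracket) := by
  rw [X_bracket_eq_mul_inv]
  exact (differentiable_bracketGradNum i).mul
    ((differentiable_bracket.pow 3).inv fun p => pow_ne_zero 3 (bracket_pos p).ne')

theorem X_X_bracket (i j : Fin 2) (p : Heis) :
    X j (X i bracket) p =
      bracketHessNum p i j / bracket p ^ 3 - 3 * X i bracket p * X j bracket p / bracket p := by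
  have hb := (bracket_pos p).ne'
  have hinv : HasDerivAt (fun s : ℝ => (s ^ 3)⁻¹) (-(3 * bracket p ^ 2) / (bracket p ^ 3) ^ 2)
      (bracket p) := by
    simpa using (hasDerivAt_pow 3 (bracket p)).fun_inv (pow_ne_zero 3 hb)
  have hproduct : X j (X i bracket) p =
      bracketGradNum i p * (-(3 * bracket p ^ 2) / (bracket p ^ 3) ^ 2 * X j bracket p)
        + (bracket p ^ 3)⁻¹ * X j (bracketGradNum i) p := by
    rw [X_bracket_eq_mul_inv, X, derivAlong_mul (h := fun q => (bracket q ^ 3)⁻¹)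
        (differentiable_bracketGradNum i p)
        (hinv.differentiableAt.comp p (differentiable_bracket p)),
      derivAlong_comp hinv (differentiable_bracket p)]
  rw [hproduct, X_bracketGradNum, X_bracket i]
  field_simp
  ring

theorem abs_X_X_bracket_le (i j : Fin 2) (p : Heis) : |X j (X i bracket) p| ≤ 17 := by
  have hb := one_le_bracket p
  have hb0 := bracket_pos p
  have hfirst : |bracketHessNum p i j / bracket p ^ 3| ≤ 5 := by
    rw [abs_div, abs_of_pos (pow_pos hb0 3), div_le_iff₀ (pow_pos hb0 3)]
    nlinarith [abs_bracketHessNum_le i j p, pow_le_pow_right₀ hb (show 2 ≤ 3 by norm_num)]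
  have hsecond : |3 * X i bracket p * X j bracket p / bracket p| ≤ 12 := by
    rw [abs_div, abs_of_pos hb0, div_le_iff₀ hb0, abs_mul, abs_mul, abs_of_pos three_pos]
    nlinarith [abs_X_bracket_le i p, abs_X_bracket_le j p, abs_nonneg (X i bracket p),
      abs_nonneg (X j bracket p)]
  rw [X_X_bracket]
  exact (abs_sub _ _).trans (by linarith)

section Radial

variable {φ φ' φ'' : ℝ → ℝ}

theorem X_comp_bracket (hφ : ∀ s, HasDerivAt φ (φ' s) s) (i : Fin 2) (p : Heis) :
    X i (fun q => φ (bracket q)) p = φ' (bracket p) * X i bracket p :=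
  derivAlong_comp (hφ _) (differentiable_bracket p)

theorem X_X_comp_bracket (hφ : ∀ s, HasDerivAt φ (φ' s) s) (hφ' : ∀ s, HasDerivAt φ' (φ'' s) s)
    (i j : Fin 2) (p : Heis) :
    X j (X i (fun q => φ (bracket q))) p =
      φ'' (bracket p) * X j bracket p * X i bracket p + φ' (bracket p) * X j (X i bracket) p :=
  derivAlong_derivAlong_comp hφ hφ' differentiable_bracket (differentiable_X_bracket i p)

theorem abs_X_comp_bracket_le (hφ : ∀ s, HasDerivAt φ (φ' s) s) (i : Fin 2) (p : Heis) :
    |X i (fun q => φ (bracket q)) p| ≤ 2 * |φ' (bracket p)| := by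
  rw [X_comp_bracket hφ, abs_mul, mul_comm]
  exact mul_le_mul_of_nonneg_right (abs_X_bracket_le i p) (abs_nonneg _)

theorem abs_hessH_comp_bracket_le (hφ : ∀ s, HasDerivAt φ (φ' s) s)
    (hφ' : ∀ s, HasDerivAt φ' (φ'' s) s) (p : Heis) (i j : Fin 2) :
    |hessH (fun q => φ (bracket q)) p i j| ≤ 4 * |φ'' (bracket p)| + 17 * |φ' (bracket p)| := by
  have hXX : ∀ k l : Fin 2, |X l (X k (fun q => φ (bracket q))) p|
      ≤ 4 * |φ'' (bracket p)| + 17 * |φ' (bracket p)| := by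
    intro k l
    have hl := abs_X_bracket_le l p
    have hk := abs_X_bracket_le k p
    rw [X_X_comp_bracket hφ hφ']
    calc _ ≤ |φ'' (bracket p)| * (|X l bracket p| * |X k bracket p|)
          + |φ' (bracket p)| * |X l (X k bracket) p| := by
          refine (abs_add_le _ _).trans_eq ?_
          simp only [abs_mul, mul_assoc]
      _ ≤ |φ'' (bracket p)| * (2 * 2) + |φ' (bracket p)| * 17 := by
          gcongr
          exact abs_X_X_bracket_le k l p
      _ = _ := by ring
  rw [hessH_apply, abs_div, abs_two]
  linarith [abs_add_le (X i (X j (fun q => φ (bracket q))) p)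
    (X j (X i (fun q => φ (bracket q))) p), hXX i j, hXX j i]

end Radial

def residual (A : Matrix (Fin 2) (Fin 2) ℝ) (f : Heis → ℝ × ℝ → ℝ) (u : ℝ → Heis → ℝ)
    (p : Heis) (t : ℝ) : ℝ :=
  deriv (fun s => u s p) t - (A * hessH (u t) p).trace + f p (X1 (u t) p, X2 (u t) p)

theorem hessH_neg (g : Heis → ℝ) (p : Heis) : hessH (fun q => -g q) p = -hessH g p := by
  ext i j
  simp only [hessH_apply, X, derivAlong_neg, Matrix.neg_apply]
  ring

theorem residual_neg (A : Matrix (Fin 2) (Fin 2) ℝ) (f : Heis → ℝ × ℝ → ℝ) (u : ℝ → Heis → ℝ)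
    (p : Heis) (t : ℝ) :
    residual A f (fun s q => -u s q) p t = -residual A (fun p ξ => -f p (-ξ)) u p t := by
  simp only [residual, deriv.fun_neg, hessH_neg, Matrix.mul_neg, Matrix.trace_neg, X1, X2,
    fderiv_fun_neg, neg_apply, Prod.neg_mk]
  ring

theorem hasDerivAt_mul_exp_add_mul (a b c s : ℝ) :
    HasDerivAt (fun σ => a * Real.exp (b + c * σ)) (a * c * Real.exp (b + c * s)) s :=
  ((((hasDerivAt_id' s).const_mul c).const_add b).exp.const_mul a).congr_deriv (by ring)

theorem residual_exp_barrier_nonneg (A : Matrix (Fin 2) (Fin 2) ℝ) (f : Heis → ℝ × ℝ → ℝ)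
    {Cf C β α : ℝ} (hf : ∀ p ξ, |f p ξ| ≤ Cf * (1 + Real.sqrt (ξ.1 ^ 2 + ξ.2 ^ 2)))
    (hCf : 0 ≤ Cf) (hC : 0 ≤ C) (hβ : 0 ≤ β)
    (hα : β * ((∑ i, ∑ j, |A i j|) * (4 * β + 17) + 4 * Cf) ≤ α) (p : Heis) (t : ℝ) :
    0 ≤ residual A f (fun s q => C * Real.exp (α * s + β * bracket q) + Cf * s) p t := by
  have hprofile : ∀ σ, HasDerivAt (fun σ => C * Real.exp (α * t + β * σ) + Cf * t)
      (C * β * Real.exp (α * t + β * σ)) σ := fun σ =>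
    (hasDerivAt_mul_exp_add_mul C (α * t) β σ).add_const (Cf * t)
  have hprofile' : ∀ σ, HasDerivAt (fun σ => C * β * Real.exp (α * t + β * σ))
      (C * β * β * Real.exp (α * t + β * σ)) σ :=
    hasDerivAt_mul_exp_add_mul (C * β) (α * t) β
  have htime : HasDerivAt (fun s => C * Real.exp (α * s + β * bracket p) + Cf * s)
      (C * (Real.exp (α * t + β * bracket p) * (α * 1)) + Cf * 1) t :=
    (((hasDerivAt_id' t).const_mul α).add_const _).exp.const_mul C |>.add
      ((hasDerivAt_id' t).const_mul Cf)
  have hP : 0 ≤ C * β * Real.exp (α * t + β * bracket p) := by positivity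
  have hhess : |(A * hessH (fun q => C * Real.exp (α * t + β * bracket q) + Cf * t) p).trace|
      ≤ (∑ i, ∑ j, |A i j|) * (C * β * Real.exp (α * t + β * bracket p) * (4 * β + 17)) := by
    refine abs_trace_mul_le A _ fun i j =>
      (abs_hessH_comp_bracket_le hprofile hprofile' p i j).trans_eq ?_
    rw [abs_of_nonneg (by positivity), abs_of_nonneg hP]
    ring
  have hgrad : Real.sqrt (X1 (fun q => C * Real.exp (α * t + β * bracket q) + Cf * t) p ^ 2
      + X2 (fun q => C * Real.exp (α * t + β * bracket q) + Cf * t) p ^ 2)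
      ≤ 4 * (C * β * Real.exp (α * t + β * bracket p)) := by
    refine (sqrt_sq_add_sq_le_abs_add_abs _ _).trans ?_
    have h0 := abs_X_comp_bracket_le hprofile 0 p
    have h1 := abs_X_comp_bracket_le hprofile 1 p
    rw [abs_of_nonneg hP] at h0 h1
    rw [← X_zero, ← X_one]
    linarith
  have hforce := neg_le_of_abs_le
    (hf p (X1 (fun q => C * Real.exp (α * t + β * bracket q) + Cf * t) p,
      X2 (fun q => C * Real.exp (α * t + β * bracket q) + Cf * t) p))
  dsimp only at hforce
  have hmargin : 0 ≤ C * Real.exp (α * t + β * bracket p) *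
      (α - β * ((∑ i, ∑ j, |A i j|) * (4 * β + 17) + 4 * Cf)) :=
    mul_nonneg (by positivity) (sub_nonneg.mpr hα)
  unfold residual
  rw [htime.deriv]
  dsimp only
  linarith [le_of_abs_le hhess, mul_le_mul_of_nonneg_left hgrad hCf]

end HeisenbergBarrier

open HeisenbergBarrier

theorem exponential_barriers_general (A : Matrix (Fin 2) (Fin 2) ℝ)
    (Cf : ℝ) (hCf : 0 < Cf) (f : Heis → ℝ × ℝ → ℝ)
    (hf : ∀ p : Heis, ∀ ξ : ℝ × ℝ, |f p ξ| ≤ Cf * (1 + Real.sqrt (ξ.1 ^ 2 + ξ.2 ^ 2))) :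
    ∀ C : ℝ, 0 < C → ∀ β : ℝ, 0 < β → ∃ α₀ : ℝ, 0 < α₀ ∧ ∀ α : ℝ, α₀ ≤ α →
      ∀ p : Heis, ∀ t : ℝ, 0 < t →
        0 ≤ deriv (fun s : ℝ => C * Real.exp (α * s + β * bracket p) + Cf * s) t
            - (A * hessH (fun q => C * Real.exp (α * t + β * bracket q) + Cf * t) p).trace
            + f p (X1 (fun q => C * Real.exp (α * t + β * bracket q) + Cf * t) p,
                   X2 (fun q => C * Real.exp (α * t + β * bracket q) + Cf * t) p) ∧
        deriv (fun s : ℝ => -(C * Real.exp (α * s + β * bracket p)) - Cf * s) t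
            - (A * hessH (fun q => -(C * Real.exp (α * t + β * bracket q)) - Cf * t) p).trace
            + f p (X1 (fun q => -(C * Real.exp (α * t + β * bracket q)) - Cf * t) p,
                   X2 (fun q => -(C * Real.exp (α * t + β * bracket q)) - Cf * t) p) ≤ 0 := by
  intro C hC β hβ
  have hf_neg : ∀ p ξ, |-f p (-ξ)| ≤ Cf * (1 + Real.sqrt (ξ.1 ^ 2 + ξ.2 ^ 2)) := fun p ξ => by
    simpa using hf p (-ξ)
  have hα₀ : 0 < β * ((∑ i, ∑ j, |A i j|) * (4 * β + 17) + 4 * Cf) := by positivity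
  refine ⟨_, hα₀, fun α hα p t _ => ⟨?_, ?_⟩⟩
  · exact residual_exp_barrier_nonneg A f hf hCf.le hC.le hβ.le hα p t
  · have hsub : (fun s q => -(C * Real.exp (α * s + β * bracket q)) - Cf * s) =
        fun s q => -(C * Real.exp (α * s + β * bracket q) + Cf * s) := by
      funext s q
      ring
    change residual A f (fun s q => -(C * Real.exp (α * s + β * bracket q)) - Cf * s) p t ≤ 0
    rw [hsub, residual_neg]
    exact neg_nonpos.mpr (residual_exp_barrier_nonneg A _ hf_neg hCf.le hC.le hβ.le hα p t)

/-- The barrier `ū(p,t) = C e^(αt + β⟨p⟩) + C_f t` is a classical supersolution, and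
`u̲ = -ū` is a classical subsolution, of `u_t - tr(A (∇_H²u)*) + f(p, ∇_H u) = 0` on
`ℍ × (0,∞)`, provided `α` is large enough (depending on `C`, `β`). -/
theorem exponential_barriers (A : Matrix (Fin 2) (Fin 2) ℝ) (hA : A.PosSemidef)
    (Cf : ℝ) (hCf : 0 < Cf) (f : Heis → ℝ × ℝ → ℝ)
    (hf : ∀ p : Heis, ∀ ξ : ℝ × ℝ, |f p ξ| ≤ Cf * (1 + Real.sqrt (ξ.1 ^ 2 + ξ.2 ^ 2))) :
    ∀ C : ℝ, 0 < C → ∀ β : ℝ, 0 < β → ∃ α₀ : ℝ, 0 < α₀ ∧ ∀ α : ℝ, α₀ ≤ α →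
      ∀ p : Heis, ∀ t : ℝ, 0 < t →
        0 ≤ deriv (fun s : ℝ => C * Real.exp (α * s + β * bracket p) + Cf * s) t
            - (A * hessH (fun q => C * Real.exp (α * t + β * bracket q) + Cf * t) p).trace
            + f p (X1 (fun q => C * Real.exp (α * t + β * bracket q) + Cf * t) p,
                   X2 (fun q => C * Real.exp (α * t + β * bracket q) + Cf * t) p) ∧
        deriv (fun s : ℝ => -(C * Real.exp (α * s + β * bracket p)) - Cf * s) t
            - (A * hessH (fun q => -(C * Real.exp (α * t + β * bracket q)) - Cf * t) p).trace
            + f p (X1 (fun q => -(C * Real.exp (α * t + β * bracket q)) - Cf * t) p,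
                   X2 (fun q => -(C * Real.exp (α * t + β * bracket q)) - Cf * t) p) ≤ 0 :=
  exponential_barriers_general A Cf hCf f hf
end
end
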